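/- arXiv:2602.03259 — 2 statements merged into one kernel-verified Lean document; each statement's English description precedes it below -/
import Mathlib

section
/- If n ≥ 3 and n ≡ 3 (mod 6), then the strong odd chromatic number of the wheel W_n = C_n ∨ K_1 equals 4. -/
open SimpleGraph

/-- A coloring `φ` of the vertices of `G` is a strong odd coloring if it is proper and,
for every vertex `v` and every color `c`, the number of neighbors of `v` colored `c`
is either zero or odd. -/
def IsStrongOddColoring {V α : Type*} (G : SimpleGraph V) (φ : V → α) : Prop :=
  (∀ u v : V, G.Adj u v → φ u ≠ φ v) ∧
  ∀ (v : V) (c : α),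
    {u : V | G.Adj v u ∧ φ u = c}.ncard = 0 ∨ Odd {u : V | G.Adj v u ∧ φ u = c}.ncard

/-- The strong odd chromatic number: the least `k` such that `G` admits a strong odd
coloring with `k` colors. -/
noncomputable def strongOddChromaticNumber {V : Type*} (G : SimpleGraph V) : ℕ :=
  sInf {k : ℕ | ∃ φ : V → Fin k, IsStrongOddColoring G φ}

/-- The join `G ∨ H` of two graphs: disjoint copies of `G` and `H` together with all
edges between them. -/
def joinGraph {V W : Type*} (G : SimpleGraph V) (H : SimpleGraph W) :
    SimpleGraph (V ⊕ W) where
  Adj x y :=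
    match x, y with
    | Sum.inl a, Sum.inl b => G.Adj a b
    | Sum.inl _, Sum.inr _ => True
    | Sum.inr _, Sum.inl _ => True
    | Sum.inr a, Sum.inr b => H.Adj a b
  symm := by constructor; rintro (a | a) (b | b) h <;> first | exact h.symm | trivial
  loopless := by constructor; rintro (a | a) h <;> first | exact G.irrefl h | exact H.irrefl h

/-- The wheel graph `W_n = C_n ∨ K_1`. -/
def wheelGraph (n : ℕ) : SimpleGraph (Fin n ⊕ Fin 1) :=
  joinGraph (cycleGraph n) (⊥ : SimpleGraph (Fin 1))

/-- `G_n = C_n ∨ K̄_2`; the two vertices of `K̄_2` are `x_n = Sum.inr 0` and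
`y_n = Sum.inr 1`. -/
def cycleJoinTwo (n : ℕ) : SimpleGraph (Fin n ⊕ Fin 2) :=
  joinGraph (cycleGraph n) (⊥ : SimpleGraph (Fin 2))

/-- The one point union of graphs `G` and `H`, obtained by identifying the vertex
`a` of `G` with the vertex `b` of `H` (the identified vertex is `Sum.inl a`). -/
def onePointUnion {V W : Type*} (G : SimpleGraph V) (H : SimpleGraph W) (a : V) (b : W) :
    SimpleGraph (V ⊕ {w : W // w ≠ b}) where
  Adj x y :=
    match x, y with
    | Sum.inl u, Sum.inl v => G.Adj u v
    | Sum.inl u, Sum.inr v => u = a ∧ H.Adj b v.1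
    | Sum.inr v, Sum.inl u => u = a ∧ H.Adj b v.1
    | Sum.inr u, Sum.inr v => H.Adj u.1 v.1
  symm := by
    constructor
    rintro (u | u) (v | v) h
    · exact h.symm
    · exact h
    · exact h
    · exact h.symm
  loopless := by
    constructor
    rintro (u | u) h
    · exact G.irrefl h
    · exact H.irrefl h

/-- `I_y(G_m, G_n)`: the one point union of `G_m = C_m ∨ K̄_2` and `G_n = C_n ∨ K̄_2`
obtained by identifying the vertices `y_m` and `y_n`. -/
def Iy (m n : ℕ) :
    SimpleGraph ((Fin m ⊕ Fin 2) ⊕ {w : Fin n ⊕ Fin 2 // w ≠ Sum.inr 1}) :=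
  onePointUnion (cycleJoinTwo m) (cycleJoinTwo n) (Sum.inr 1) (Sum.inr 1)

/-- A planar embedding of a graph `G`: an injective placement of the vertices in the
plane together with, for each edge, an arc (injective path) joining the images of its
endpoints, such that arcs do not pass through images of other vertices and two arcs of
distinct edges meet only in common endpoints. -/
structure PlanarEmbedding {V : Type*} (G : SimpleGraph V) where
  vmap : V → ℝ × ℝ
  vmap_inj : Function.Injective vmap
  arc : ∀ u v : V, G.Adj u v → Path (vmap u) (vmap v)
  arc_symm : ∀ (u v : V) (h : G.Adj u v), arc v u h.symm = (arc u v h).symm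
  arc_inj : ∀ (u v : V) (h : G.Adj u v), Function.Injective (arc u v h)
  arc_vertex : ∀ (u v : V) (h : G.Adj u v) (w : V),
    vmap w ∈ Set.range (arc u v h) → w = u ∨ w = v
  arc_disjoint : ∀ (u v u' v' : V) (h : G.Adj u v) (h' : G.Adj u' v'),
    s(u, v) ≠ s(u', v') →
    Set.range (arc u v h) ∩ Set.range (arc u' v' h') ⊆
      ({vmap u, vmap v} ∩ {vmap u', vmap v'} : Set (ℝ × ℝ))

/-- A graph is planar if it admits a planar embedding. -/
def IsPlanar {V : Type*} (G : SimpleGraph V) : Prop :=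
  Nonempty (PlanarEmbedding G)

/-! Colour the cycle by residues mod 3 and the hub by a fourth colour. Since `3 ∣ n`, the
wrap-around edge also joins consecutive residues, so the colouring is proper and the two cycle
neighbours of a rim vertex get different colours; the hub sees each residue class `n / 3` times,
which is odd because `n ≡ 3 (mod 6)`. Conversely the hub's colour is missing from the odd cycle,
which needs three colours of its own. -/

section Join

variable {V W : Type*} {G : SimpleGraph V} {H : SimpleGraph W}

@[simp]
theorem joinGraph_adj_inl_inl {a b : V} : (joinGraph G H).Adj (.inl a) (.inl b) ↔ G.Adj a b :=
  Iff.rfl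

@[simp]
theorem joinGraph_adj_inl_inr {a : V} {b : W} : (joinGraph G H).Adj (.inl a) (.inr b) :=
  trivial

@[simp]
theorem joinGraph_adj_inr_inl {a : W} {b : V} : (joinGraph G H).Adj (.inr a) (.inl b) :=
  trivial

@[simp]
theorem joinGraph_adj_inr_inr {a b : W} : (joinGraph G H).Adj (.inr a) (.inr b) ↔ H.Adj a b :=
  Iff.rfl

theorem SimpleGraph.Colorable.of_joinGraph {k : ℕ} (h : (joinGraph G H).Colorable (k + 1))
    (w : W) : G.Colorable k := by
  obtain ⟨C⟩ := h
  let C' : G.Coloring {c // c ≠ C (.inr w)} :=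
    Coloring.mk (fun v => ⟨C (.inl v), C.valid joinGraph_adj_inl_inr⟩) fun h => by
      simpa using C.valid (joinGraph_adj_inl_inl.2 h)
  simpa using C'.colorable

end Join

theorem Set.ncard_eq_zero_or_odd_of_subsingleton {α : Type*} {s : Set α} (hs : s.Subsingleton) :
    s.ncard = 0 ∨ Odd s.ncard := by
  rcases hs.eq_empty_or_singleton with rfl | ⟨x, rfl⟩ <;> simp

section StrongOddColoring

variable {V W α β : Type*} {G : SimpleGraph V} {H : SimpleGraph W}

theorem isStrongOddColoring_bot (φ : V → α) : IsStrongOddColoring (⊥ : SimpleGraph V) φ :=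
  ⟨fun _ _ h => h.elim, fun _ _ => Or.inl (by simp)⟩

theorem IsStrongOddColoring.comp_equiv {φ : V → α} (hφ : IsStrongOddColoring G φ) (e : α ≃ β) :
    IsStrongOddColoring G (e ∘ φ) :=
  ⟨fun u v h => e.injective.ne (hφ.1 u v h), fun v c => by
    simpa only [Function.comp_apply, ← e.eq_symm_apply] using hφ.2 v (e.symm c)⟩

theorem IsStrongOddColoring.join {φ : V → α} {ψ : W → β}
    (hφ : IsStrongOddColoring G φ) (hψ : IsStrongOddColoring H ψ)
    (hφc : ∀ a, {v | φ v = a}.ncard = 0 ∨ Odd {v | φ v = a}.ncard)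
    (hψc : ∀ b, {w | ψ w = b}.ncard = 0 ∨ Odd {w | ψ w = b}.ncard) :
    IsStrongOddColoring (joinGraph G H) (Sum.map φ ψ) := by
  refine ⟨?_, ?_⟩
  · rintro (u | u) (v | v) h
    · simpa using hφ.1 u v h
    · simp
    · simp
    · simpa using hψ.1 u v h
  · rintro (v | w) (a | b)
    · have hset : {u | (joinGraph G H).Adj (.inl v) u ∧ Sum.map φ ψ u = .inl a} =
          Sum.inl '' {u | G.Adj v u ∧ φ u = a} := by
        ext (u | u) <;> simp
      rw [hset, Set.ncard_image_of_injective _ Sum.inl_injective]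
      exact hφ.2 v a
    · have hset : {u | (joinGraph G H).Adj (.inl v) u ∧ Sum.map φ ψ u = .inr b} =
          Sum.inr '' {w | ψ w = b} := by
        ext (u | u) <;> simp
      rw [hset, Set.ncard_image_of_injective _ Sum.inr_injective]
      exact hψc b
    · have hset : {u | (joinGraph G H).Adj (.inr w) u ∧ Sum.map φ ψ u = .inl a} =
          Sum.inl '' {v | φ v = a} := by
        ext (u | u) <;> simp
      rw [hset, Set.ncard_image_of_injective _ Sum.inl_injective]
      exact hφc a
    · have hset : {u | (joinGraph G H).Adj (.inr w) u ∧ Sum.map φ ψ u = .inr b} =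
          Sum.inr '' {u | H.Adj w u ∧ ψ u = b} := by
        ext (u | u) <;> simp
      rw [hset, Set.ncard_image_of_injective _ Sum.inr_injective]
      exact hψ.2 w b

theorem IsStrongOddColoring.colorable {k : ℕ} {φ : V → Fin k} (hφ : IsStrongOddColoring G φ) :
    G.Colorable k :=
  ⟨Coloring.mk φ fun h => hφ.1 _ _ h⟩

theorem strongOddChromaticNumber_eq_of_not_colorable {k : ℕ} (φ : V → Fin (k + 1))
    (hφ : IsStrongOddColoring G φ) (hk : ¬ G.Colorable k) :
    strongOddChromaticNumber G = k + 1 := by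
  refine le_antisymm (Nat.sInf_le ⟨φ, hφ⟩) (le_csInf ⟨_, φ, hφ⟩ ?_)
  rintro m ⟨ψ, hψ⟩
  by_contra! hm
  exact hk (hψ.colorable.mono (by omega))

end StrongOddColoring

theorem cycleGraph_adj_iff_eq_add_one {n : ℕ} {u v : Fin (n + 2)} :
    (cycleGraph (n + 2)).Adj u v ↔ v = u + 1 ∨ u = v + 1 := by
  rw [← mem_neighborSet, cycleGraph_neighborSet]
  simp [eq_sub_iff_add_eq, or_comm, eq_comm (a := u)]

def modThreeColor {n : ℕ} (i : Fin n) : ZMod 3 := (i.val : ZMod 3)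

theorem modThreeColor_add_one {n : ℕ} (h : 3 ∣ n + 2) (i : Fin (n + 2)) :
    modThreeColor (i + 1) = modThreeColor i + 1 := by
  rw [modThreeColor, modThreeColor, Fin.val_add, Fin.val_one, ← Nat.cast_add_one,
    (ZMod.natCast_eq_natCast_iff' _ _ 3).2 (Nat.mod_mod_of_dvd _ h)]

theorem ncard_setOf_modThreeColor_eq {n : ℕ} (h : 3 ∣ n) (a : ZMod 3) :
    {i : Fin n | modThreeColor i = a}.ncard = n / 3 := by
  have hcast (x : ℕ) : (x : ZMod 3) = a ↔ x ≡ a.val [MOD 3] := by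
    rw [← ZMod.natCast_eq_natCast_iff, ZMod.natCast_zmod_val]
  have himage : Fin.val '' {i : Fin n | modThreeColor i = a} =
      ↑{x ∈ Finset.range n | x ≡ a.val [MOD 3]} := by
    ext x
    simp [modThreeColor, hcast, Fin.exists_iff, and_comm]
  rw [← Set.ncard_image_of_injective _ Fin.val_injective, himage, Set.ncard_coe_finset,
    ← Nat.count_eq_card_filter_range, Nat.count_modEq_card _ three_pos]
  simp [Nat.mod_eq_zero_of_dvd h]

theorem isStrongOddColoring_cycleGraph_modThreeColor {n : ℕ} (h : 3 ∣ n + 2) :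
    IsStrongOddColoring (cycleGraph (n + 2)) modThreeColor := by
  have hsucc : ∀ a : ZMod 3, a + 1 ≠ a := by decide
  have hsucc_succ : ∀ a : ZMod 3, a + 1 + 1 ≠ a := by decide
  refine ⟨fun u v huv => ?_, fun v a => Set.ncard_eq_zero_or_odd_of_subsingleton ?_⟩
  · rcases cycleGraph_adj_iff_eq_add_one.1 huv with rfl | rfl
    · rw [modThreeColor_add_one h]; exact (hsucc _).symm
    · rw [modThreeColor_add_one h]; exact hsucc _
  · rintro u₁ ⟨h₁, hc₁⟩ u₂ ⟨h₂, hc₂⟩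
    rcases cycleGraph_adj_iff_eq_add_one.1 h₁ with rfl | rfl <;>
      rcases cycleGraph_adj_iff_eq_add_one.1 h₂ with rfl | h₂
    · rfl
    · subst h₂
      rw [modThreeColor_add_one h, modThreeColor_add_one h] at hc₁
      exact absurd (hc₁.trans hc₂.symm) (hsucc_succ _)
    · rw [modThreeColor_add_one h, modThreeColor_add_one h] at hc₂
      exact absurd (hc₂.trans hc₁.symm) (hsucc_succ _)
    · exact add_right_cancel h₂

theorem exists_isStrongOddColoring_wheelGraph {n : ℕ} (h : (n + 2) % 6 = 3) :
    ∃ φ : Fin (n + 2) ⊕ Fin 1 → Fin 4, IsStrongOddColoring (wheelGraph (n + 2)) φ := by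
  have h3 : 3 ∣ n + 2 := by omega
  have hjoin := (isStrongOddColoring_cycleGraph_modThreeColor h3).join
    (isStrongOddColoring_bot (id : Fin 1 → Fin 1))
    (fun a => Or.inr (by rw [ncard_setOf_modThreeColor_eq h3]; exact Nat.odd_iff.2 (by omega)))
    (fun _ => Set.ncard_eq_zero_or_odd_of_subsingleton fun _ h₁ _ h₂ => h₁.trans h₂.symm)
  exact ⟨_, hjoin.comp_equiv (Fintype.equivOfCardEq (by simp) : ZMod 3 ⊕ Fin 1 ≃ Fin 4)⟩

theorem wheelGraph_not_colorable_three {n : ℕ} (hn : Odd n) (h : 2 ≤ n) :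
    ¬ (wheelGraph n).Colorable 3 := fun hcol => by
  have hle := (hcol.of_joinGraph 0).chromaticNumber_le
  rw [chromaticNumber_cycleGraph_of_odd n h hn] at hle
  norm_num at hle

theorem stmt_3_general (n : ℕ) (hmod : n % 6 = 3) :
    strongOddChromaticNumber (wheelGraph n) = 4 := by
  obtain ⟨m, rfl⟩ : ∃ m, n = m + 2 := ⟨n - 2, by omega⟩
  obtain ⟨φ, hφ⟩ := exists_isStrongOddColoring_wheelGraph hmod
  exact strongOddChromaticNumber_eq_of_not_colorable φ hφ
    (wheelGraph_not_colorable_three (Nat.odd_iff.2 (by omega)) (by omega))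

/-- If `n ≥ 3` and `n ≡ 3 (mod 6)`, then the strong odd chromatic number of the wheel
`W_n = C_n ∨ K_1` equals `4`. -/
theorem stmt_3 (n : ℕ) (hn : 3 ≤ n) (hmod : n % 6 = 3) :
    strongOddChromaticNumber (wheelGraph n) = 4 :=
  stmt_3_general n hmod
end

section
/- The strong odd chromatic number of I_y(G_7, G_8) equals 16. -/
open SimpleGraph

/-! In a strong odd colouring no colour occurs exactly twice around a vertex. Along a cycle
`C_n` of `G_n` this forbids equal colours at distance two: the only other neighbours of the
middle vertex are the hubs `x_n, y`, which see both ends. A repeated colour in `C_n`, as seen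
from `x_n`, would occur a third time, and for `n ≤ 8` two of three vertices of `C_n` are at
distance at most two; so each cycle is rainbow. Seen from `y`, a repeated colour on
`C_7 ∪ C_8` would again occur three times, twice on one cycle. Hence `y` and its fifteen
neighbours need sixteen colours, and sixteen suffice since every neighbourhood can be made
rainbow. -/

def SimpleGraph.WithinDistTwo {ι : Type*} (H : SimpleGraph ι) (a b : ι) : Prop :=
  H.Adj a b ∨ ∃ m, H.Adj m a ∧ H.Adj m b

instance {ι : Type*} [Fintype ι] (H : SimpleGraph ι) [DecidableRel H.Adj] :
    DecidableRel H.WithinDistTwo :=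
  fun _ _ => inferInstanceAs (Decidable (_ ∨ _))

-- Three points on a cycle of length at most `8` cut it into arcs, one of length at most `2`.
theorem cycleGraph_withinDistTwo_of_three {n : ℕ} (hn : n ≤ 8) {a b d : Fin n}
    (hab : a ≠ b) (hbd : b ≠ d) (had : a ≠ d) :
    (cycleGraph n).WithinDistTwo a b ∨ (cycleGraph n).WithinDistTwo b d ∨
      (cycleGraph n).WithinDistTwo a d := by
  interval_cases n <;> revert a b d <;> decide

theorem cycleGraph_degree_le_two {n : ℕ} (v : Fin n) : (cycleGraph n).degree v ≤ 2 := by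
  match n with
  | 0 | 1 => exact (degree_lt_card_verts v).le.trans (by simp)
  | _ + 2 => exact cycleGraph_degree_two_le ▸ Finset.card_le_two

section StrongOddColoring

variable {V α : Type*} {G : SimpleGraph V} {φ : V → α}

theorem IsStrongOddColoring.of_injOn_neighborSet (hproper : ∀ u v, G.Adj u v → φ u ≠ φ v)
    (hinj : ∀ v, Set.InjOn φ (G.neighborSet v)) : IsStrongOddColoring G φ := by
  refine ⟨hproper, fun v c => ?_⟩
  have hsub : {u | G.Adj v u ∧ φ u = c}.Subsingleton := fun u hu w hw =>
    hinj v hu.1 hw.1 (hu.2.trans hw.2.symm)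
  rcases hsub.eq_empty_or_singleton with h | ⟨u, h⟩
  · exact .inl (by rw [h, Set.ncard_empty])
  · exact .inr (by rw [h, Set.ncard_singleton]; exact odd_one)

theorem IsStrongOddColoring.exists_third (hφ : IsStrongOddColoring G φ) {v u₁ u₂ : V}
    (h₁ : G.Adj v u₁) (h₂ : G.Adj v u₂) (hne : u₁ ≠ u₂) (hc : φ u₁ = φ u₂) :
    ∃ u₃, G.Adj v u₃ ∧ φ u₃ = φ u₁ ∧ u₃ ≠ u₁ ∧ u₃ ≠ u₂ := by
  by_contra! hno
  have hpair : {u | G.Adj v u ∧ φ u = φ u₁} = {u₁, u₂} := by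
    ext u
    simp only [Set.mem_ofPred_eq, Set.mem_insert_iff, Set.mem_singleton_iff]
    refine ⟨fun ⟨hu, hcu⟩ => ?_, ?_⟩
    · by_contra! h
      exact h.2 (hno u hu hcu h.1)
    · rintro (rfl | rfl)
      exacts [⟨h₁, rfl⟩, ⟨h₂, hc.symm⟩]
  have := hφ.2 v (φ u₁)
  rw [hpair, Set.ncard_pair hne] at this
  norm_num [Nat.odd_iff] at this

theorem IsStrongOddColoring.injOn_neighborSet_of_subset_union (hφ : IsStrongOddColoring G φ)
    {v : V} {A B : Set V} (hAB : G.neighborSet v ⊆ A ∪ B) (hA : Set.InjOn φ A)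
    (hB : Set.InjOn φ B) : Set.InjOn φ (G.neighborSet v) := by
  intro u₁ h₁ u₂ h₂ hc
  by_contra hne
  obtain ⟨u₃, h₃, hc₃, hne₁, hne₂⟩ := hφ.exists_third h₁ h₂ hne hc
  rcases hAB h₁ with h₁ | h₁ <;> rcases hAB h₂ with h₂ | h₂ <;>
    rcases hAB ((mem_neighborSet _ _ _).2 h₃) with h₃ | h₃ <;>
    first
    | exact hne (hA h₁ h₂ hc) | exact hne (hB h₁ h₂ hc)
    | exact hne₁ (hA h₃ h₁ hc₃) | exact hne₁ (hB h₃ h₁ hc₃)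
    | exact hne₂ (hA h₃ h₂ (hc₃.trans hc)) | exact hne₂ (hB h₃ h₂ (hc₃.trans hc))

theorem IsStrongOddColoring.injOn_insert_neighborSet (hφ : IsStrongOddColoring G φ) {v : V}
    (hinj : Set.InjOn φ (G.neighborSet v)) : Set.InjOn φ (insert v (G.neighborSet v)) := by
  refine (Set.injOn_insert G.notMem_neighborSet_self).2 ⟨hinj, ?_⟩
  rintro ⟨u, hu, hc⟩
  exact hφ.1 v u hu hc.symm

variable {ι : Type*} {H : SimpleGraph ι}

theorem IsStrongOddColoring.apply_ne_of_adj_of_adj [H.LocallyFinite]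
    (hφ : IsStrongOddColoring G φ) (c : H ↪g G) (hdeg : ∀ m, H.degree m ≤ 2)
    (hhub : ∀ i u, G.Adj (c i) u → u ∉ Set.range c → ∀ j, G.Adj u (c j))
    {m i j : ι} (hi : H.Adj m i) (hj : H.Adj m j) (hij : i ≠ j) : φ (c i) ≠ φ (c j) := by
  intro hc
  obtain ⟨u, hu, hcu, hui, huj⟩ :=
    hφ.exists_third (c.map_adj_iff.2 hi) (c.map_adj_iff.2 hj) (c.injective.ne hij) hc
  by_cases hrange : u ∈ Set.range c
  · obtain ⟨k, rfl⟩ := hrange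
    have hk : H.Adj m k := c.map_adj_iff.1 hu
    refine (hdeg m).not_gt (Finset.two_lt_card.2 ⟨i, ?_, j, ?_, k, ?_, hij, ?_, ?_⟩)
    · simpa using hi
    · simpa using hj
    · simpa using hk
    · rintro rfl; exact hui rfl
    · rintro rfl; exact huj rfl
  · exact hφ.1 _ _ (hhub m u hu hrange i) hcu

theorem IsStrongOddColoring.apply_ne_of_withinDistTwo [H.LocallyFinite]
    (hφ : IsStrongOddColoring G φ) (c : H ↪g G) (hdeg : ∀ m, H.degree m ≤ 2)
    (hhub : ∀ i u, G.Adj (c i) u → u ∉ Set.range c → ∀ j, G.Adj u (c j))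
    {a b : ι} (hab : a ≠ b) (hnear : H.WithinDistTwo a b) : φ (c a) ≠ φ (c b) := by
  rcases hnear with hadj | ⟨m, ha, hb⟩
  · exact hφ.1 _ _ (c.map_adj_iff.2 hadj)
  · exact hφ.apply_ne_of_adj_of_adj c hdeg hhub ha hb hab

theorem IsStrongOddColoring.injective_comp_of_cycle {n : ℕ} (hn : n ≤ 8)
    (hφ : IsStrongOddColoring G φ) (c : cycleGraph n ↪g G)
    (hhub : ∀ i u, G.Adj (c i) u → u ∉ Set.range c → ∀ j, G.Adj u (c j))
    {x : V} (hx : ∀ u, G.Adj x u ↔ u ∈ Set.range c) : Function.Injective (φ ∘ c) := by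
  have hne {a b : Fin n} (hab : a ≠ b) (hnear : (cycleGraph n).WithinDistTwo a b) :=
    hφ.apply_ne_of_withinDistTwo c cycleGraph_degree_le_two hhub hab hnear
  intro a b hc
  by_contra hab
  obtain ⟨u, hu, hcu, hua, hub⟩ :=
    hφ.exists_third ((hx _).2 ⟨a, rfl⟩) ((hx _).2 ⟨b, rfl⟩) (c.injective.ne hab) hc
  obtain ⟨d, rfl⟩ := (hx u).1 hu
  have hda : d ≠ a := fun h => hua (h ▸ rfl)
  have hdb : d ≠ b := fun h => hub (h ▸ rfl)
  rcases cycleGraph_withinDistTwo_of_three hn hab hdb.symm hda.symm with h | h | h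
  · exact hne hab h hc
  · exact hne hdb.symm h (hc.symm.trans hcu.symm)
  · exact hne hda.symm h hcu.symm

end StrongOddColoring

theorem strongOddChromaticNumber_eq_of_injOn {V : Type*} {G : SimpleGraph V} {s : Set V}
    {k : ℕ} (hs : s.ncard = k) (φ : V → Fin k) (hφ : IsStrongOddColoring G φ)
    (hinj : ∀ {l} (ψ : V → Fin l), IsStrongOddColoring G ψ → Set.InjOn ψ s) :
    strongOddChromaticNumber G = k := by
  refine le_antisymm (Nat.sInf_le ⟨φ, hφ⟩) (le_csInf ⟨k, φ, hφ⟩ ?_)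
  rintro l ⟨ψ, hψ⟩
  calc k = s.ncard := hs.symm
    _ ≤ (Set.univ : Set (Fin l)).ncard :=
      Set.ncard_le_ncard_of_injOn ψ (fun _ _ => Set.mem_univ _) (hinj ψ hψ)
    _ = l := by simp

namespace Iy

variable (m n : ℕ)

def leftHub : (Fin m ⊕ Fin 2) ⊕ {w : Fin n ⊕ Fin 2 // w ≠ Sum.inr 1} :=
  Sum.inl (Sum.inr 0)

def rightHub : (Fin m ⊕ Fin 2) ⊕ {w : Fin n ⊕ Fin 2 // w ≠ Sum.inr 1} :=
  Sum.inr ⟨Sum.inr 0, by simp⟩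

def sharedHub : (Fin m ⊕ Fin 2) ⊕ {w : Fin n ⊕ Fin 2 // w ≠ Sum.inr 1} :=
  Sum.inl (Sum.inr 1)

def leftCycle : cycleGraph m ↪g Iy m n where
  toFun i := Sum.inl (Sum.inl i)
  inj' _ _ h := by simpa using h
  map_rel_iff' := Iff.rfl

def rightCycle : cycleGraph n ↪g Iy m n where
  toFun j := Sum.inr ⟨Sum.inl j, Sum.inl_ne_inr⟩
  inj' _ _ h := by simpa using h
  map_rel_iff' := Iff.rfl

variable {m n}

theorem leftCycle_hub (i : Fin m) (u) (hu : (Iy m n).Adj (leftCycle m n i) u)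
    (hnot : u ∉ Set.range (leftCycle m n)) (j : Fin m) : (Iy m n).Adj u (leftCycle m n j) := by
  rcases u with (k | b) | ⟨w, hw⟩
  · exact absurd ⟨k, rfl⟩ hnot
  · trivial
  · exact absurd hu.1 (by simp)

theorem rightCycle_hub (i : Fin n) (u) (hu : (Iy m n).Adj (rightCycle m n i) u)
    (hnot : u ∉ Set.range (rightCycle m n)) (j : Fin n) : (Iy m n).Adj u (rightCycle m n j) := by
  rcases u with (k | b) | ⟨k | b, hw⟩
  · exact absurd hu.1 (by simp)
  · exact ⟨by simpa using hu.1, trivial⟩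
  · exact absurd ⟨k, rfl⟩ hnot
  · trivial

theorem adj_leftHub_iff (u) : (Iy m n).Adj (leftHub m n) u ↔ u ∈ Set.range (leftCycle m n) := by
  rcases u with (k | b) | ⟨w, hw⟩
  · exact iff_of_true trivial ⟨k, rfl⟩
  · exact iff_of_false id (by rintro ⟨k, hk⟩; cases hk)
  · exact iff_of_false (fun h => by simpa using h.1) (by rintro ⟨k, hk⟩; cases hk)

theorem adj_rightHub_iff (u) :
    (Iy m n).Adj (rightHub m n) u ↔ u ∈ Set.range (rightCycle m n) := by
  rcases u with (k | b) | ⟨k | b, hw⟩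
  · exact iff_of_false (fun h => by simpa using h.1) (by rintro ⟨k, hk⟩; cases hk)
  · exact iff_of_false (·.2) (by rintro ⟨k, hk⟩; cases hk)
  · exact iff_of_true trivial ⟨k, rfl⟩
  · exact iff_of_false id (by rintro ⟨k, hk⟩; cases hk)

theorem neighborSet_sharedHub : (Iy m n).neighborSet (sharedHub m n) =
    Set.range (leftCycle m n) ∪ Set.range (rightCycle m n) := by
  ext u
  rcases u with (k | b) | ⟨k | b, hw⟩
  · exact iff_of_true trivial (.inl ⟨k, rfl⟩)
  · exact iff_of_false id (by rintro (⟨k, hk⟩ | ⟨k, hk⟩) <;> cases hk)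
  · exact iff_of_true ⟨rfl, trivial⟩ (.inr ⟨k, rfl⟩)
  · exact iff_of_false (·.2) (by rintro (⟨k, hk⟩ | ⟨k, hk⟩) <;> cases hk)

theorem ncard_insert_neighborSet_sharedHub :
    (insert (sharedHub m n) ((Iy m n).neighborSet (sharedHub m n))).ncard = m + n + 1 := by
  have hdisj : Disjoint (Set.range (leftCycle m n)) (Set.range (rightCycle m n)) :=
    Set.disjoint_left.2 (by rintro _ ⟨i, rfl⟩ ⟨j, hj⟩; cases hj)
  rw [Set.ncard_insert_of_notMem (notMem_neighborSet_self _), neighborSet_sharedHub,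
    Set.ncard_union_eq hdisj, Set.ncard_range_of_injective (leftCycle m n).injective,
    Set.ncard_range_of_injective (rightCycle m n).injective, Nat.card_fin, Nat.card_fin]

end Iy

instance {V W : Type*} (G : SimpleGraph V) (H : SimpleGraph W)
    [DecidableRel G.Adj] [DecidableRel H.Adj] : DecidableRel (joinGraph G H).Adj :=
  fun x y => match x, y with
  | Sum.inl a, Sum.inl b => inferInstanceAs (Decidable (G.Adj a b))
  | Sum.inl _, Sum.inr _ => .isTrue trivial
  | Sum.inr _, Sum.inl _ => .isTrue trivial
  | Sum.inr a, Sum.inr b => inferInstanceAs (Decidable (H.Adj a b))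

instance {V W : Type*} [DecidableEq V] (G : SimpleGraph V) (H : SimpleGraph W)
    (a : V) (b : W) [DecidableRel G.Adj] [DecidableRel H.Adj] :
    DecidableRel (onePointUnion G H a b).Adj :=
  fun x y => match x, y with
  | Sum.inl u, Sum.inl v => inferInstanceAs (Decidable (G.Adj u v))
  | Sum.inl u, Sum.inr v => inferInstanceAs (Decidable (u = a ∧ H.Adj b v.1))
  | Sum.inr v, Sum.inl u => inferInstanceAs (Decidable (u = a ∧ H.Adj b v.1))
  | Sum.inr u, Sum.inr v => inferInstanceAs (Decidable (H.Adj u.1 v.1))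

instance (m n : ℕ) : DecidableRel (Iy m n).Adj :=
  inferInstanceAs (DecidableRel (onePointUnion (joinGraph _ _) (joinGraph _ _) _ _).Adj)

-- `x_7` and `x_8` reuse colours of the cycle they are not adjacent to.
def Iy.rainbowColoring : (Fin 7 ⊕ Fin 2) ⊕ {w : Fin 8 ⊕ Fin 2 // w ≠ Sum.inr 1} → Fin 16
  | Sum.inl (Sum.inl i) => ⟨i, by omega⟩
  | Sum.inl (Sum.inr 0) => 7
  | Sum.inl (Sum.inr 1) => 15
  | Sum.inr ⟨Sum.inl j, _⟩ => ⟨7 + j, by omega⟩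
  | Sum.inr ⟨Sum.inr _, _⟩ => 0

theorem Iy.isStrongOddColoring_rainbowColoring :
    IsStrongOddColoring (Iy 7 8) rainbowColoring := by
  have hrainbow : ∀ v u, (Iy 7 8).Adj v u → ∀ w, (Iy 7 8).Adj v w → u ≠ w →
      rainbowColoring u ≠ rainbowColoring w := by
    decide
  exact .of_injOn_neighborSet (by decide) fun v u hu w hw =>
    not_imp_not.1 (hrainbow v u hu w hw)

/-- The strong odd chromatic number of `I_y(G_7, G_8)` equals `16`. -/
theorem stmt_13 : strongOddChromaticNumber (Iy 7 8) = 16 := by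
  refine strongOddChromaticNumber_eq_of_injOn Iy.ncard_insert_neighborSet_sharedHub _
    Iy.isStrongOddColoring_rainbowColoring fun ψ hψ => hψ.injOn_insert_neighborSet ?_
  have hleft := hψ.injective_comp_of_cycle (by norm_num) (Iy.leftCycle 7 8) Iy.leftCycle_hub
    Iy.adj_leftHub_iff
  have hright := hψ.injective_comp_of_cycle le_rfl (Iy.rightCycle 7 8) Iy.rightCycle_hub
    Iy.adj_rightHub_iff
  exact hψ.injOn_neighborSet_of_subset_union Iy.neighborSet_sharedHub.subset
    hleft.injOn_range hright.injOn_range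
end
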